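/- arXiv:1607.04137 — 2 statements merged into one kernel-verified Lean document; each statement's English description precedes it below -/
import Mathlib

section
/- Let C be an [n,k,d] linear code over GF(q) with locality l, meaning every coordinate of a codeword can be recovered as a function of at most l other coordinates. Then d ≤ n − k + 2 − ⌈k/l⌉. -/
/-!
For a set `S` of coordinates let `V(S) ≤ C` be the subcode of codewords vanishing on `S`.
A nonzero element of `V(S)` has weight at most `n - |S|`, so it suffices to find a large `S`
with `V(S) ≠ 0`.
Imposing `|T|` more linear conditions lowers `dim V` by at most `|T|`, so `|S| + dim V(S)` is
monotone in `S`, and by locality a coordinate `i` whose recovery set `R_i` lies in `S` costs no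
dimension at all. Adding `{i} ∪ R_i` for some `i ∉ S`, `t` times starting from `∅`, therefore
yields `dim V(S) ≥ k - t l` and `|S| + dim V(S) ≥ k + t`. For `t = ⌈k/l⌉ - 1` we still have
`V(S) ≠ 0`, and a maximal superset of `S` with nonzero subcode has `dim V = 1` and at least
`k + ⌈k/l⌉ - 2` elements.
-/

open Finset Module

theorem Submodule.finrank_le_finrank_inf_ker_add {K V W : Type*} [Field K] [AddCommGroup V]
    [Module K V] [AddCommGroup W] [Module K W] [FiniteDimensional K V] [FiniteDimensional K W]
    (p : Submodule K V) (f : V →ₗ[K] W) :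
    finrank K p ≤ finrank K ↥(p ⊓ LinearMap.ker f) + finrank K W := by
  have := LinearMap.finrank_range_add_finrank_ker (f.domRestrict p)
  rw [LinearMap.ker_domRestrict, ← Submodule.finrank_map_subtype_eq,
    Submodule.map_comap_subtype] at this
  have := Submodule.finrank_le (LinearMap.range (f.domRestrict p))
  omega

namespace Submodule

variable {F ι : Type*} [Field F] (C : Submodule F (ι → F))

def vanishingOn (S : Finset ι) : Submodule F (ι → F) :=
  C ⊓ pi (S : Set ι) fun _ => ⊥

def IsRecoverableFrom [DecidableEq ι] (i : ι) (R : Finset ι) : Prop :=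
  ∃ f : (ι → F) → F, ∀ c ∈ C, c i = f (fun x => if x ∈ R then c x else 0)

variable {C}

theorem mem_vanishingOn {S : Finset ι} {c : ι → F} :
    c ∈ C.vanishingOn S ↔ c ∈ C ∧ ∀ i ∈ S, c i = 0 := by
  simp [vanishingOn, mem_pi]

theorem vanishingOn_empty : C.vanishingOn ∅ = C := by
  ext c; simp [mem_vanishingOn]

theorem vanishingOn_univ [Fintype ι] : C.vanishingOn univ = ⊥ := by
  ext c
  simp only [mem_vanishingOn, mem_univ, true_implies, mem_bot]
  exact ⟨fun h => funext h.2, by rintro rfl; exact ⟨C.zero_mem, fun _ => rfl⟩⟩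

theorem vanishingOn_union [DecidableEq ι] (S T : Finset ι) :
    C.vanishingOn (S ∪ T) =
      C.vanishingOn S ⊓ LinearMap.ker (LinearMap.funLeft F F ((↑) : T → ι)) := by
  ext c; simp [mem_vanishingOn, funext_iff, or_imp, forall_and, and_assoc]

variable (C) in
theorem finrank_vanishingOn_le_union [Fintype ι] [DecidableEq ι] (S T : Finset ι) :
    finrank F (C.vanishingOn S) ≤ finrank F (C.vanishingOn (S ∪ T)) + #T := by
  have := (C.vanishingOn S).finrank_le_finrank_inf_ker_add
    (LinearMap.funLeft F F ((↑) : T → ι))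
  rwa [← vanishingOn_union, finrank_fintype_fun_eq_card, Fintype.card_coe] at this

theorem IsRecoverableFrom.apply_eq_zero [DecidableEq ι] {i : ι} {R : Finset ι}
    (h : C.IsRecoverableFrom i R) {c : ι → F} (hc : c ∈ C) (hR : ∀ j ∈ R, c j = 0) :
    c i = 0 := by
  obtain ⟨f, hf⟩ := h
  have hres : (fun x => if x ∈ R then c x else 0) =
      fun x => if x ∈ R then (0 : ι → F) x else 0 := by
    funext x; split_ifs with hx <;> simp [hR x, hx]
  rw [hf c hc, hres, ← hf 0 C.zero_mem, Pi.zero_apply]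

theorem vanishingOn_insert_of_isRecoverableFrom [DecidableEq ι] {i : ι} {R S : Finset ι}
    (h : C.IsRecoverableFrom i R) (hRS : R ⊆ S) :
    C.vanishingOn (insert i S) = C.vanishingOn S := by
  ext c
  simp only [mem_vanishingOn, mem_insert, forall_eq_or_imp]
  exact ⟨fun ⟨hc, _, hS⟩ => ⟨hc, hS⟩,
    fun ⟨hc, hS⟩ => ⟨hc, h.apply_eq_zero hc fun j hj => hS j (hRS hj), hS⟩⟩

section Fintype

variable [Fintype ι] [DecidableEq ι]

variable (C) in
theorem card_add_finrank_vanishingOn_mono {S T : Finset ι} (hST : S ⊆ T) :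
    #S + finrank F (C.vanishingOn S) ≤ #T + finrank F (C.vanishingOn T) := by
  have h := finrank_vanishingOn_le_union C S (T \ S)
  rw [union_sdiff_of_subset hST, card_sdiff_of_subset hST] at h
  have := card_le_card hST
  omega

theorem exists_notMem_of_finrank_vanishingOn_pos {S : Finset ι}
    (hS : 0 < finrank F (C.vanishingOn S)) : ∃ i, i ∉ S := by
  by_contra! h
  rw [eq_univ_of_forall h, vanishingOn_univ, finrank_bot] at hS
  exact hS.false

theorem exists_superset_finrank_vanishingOn_eq_one {S : Finset ι}
    (hS : 0 < finrank F (C.vanishingOn S)) :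
    ∃ T, S ⊆ T ∧ finrank F (C.vanishingOn T) = 1 := by
  obtain ⟨T, hT, hmax⟩ := exists_max_image
    {T | S ⊆ T ∧ 0 < finrank F (C.vanishingOn T)} card ⟨S, by simpa using hS⟩
  simp only [mem_filter, mem_univ, true_and] at hT hmax
  refine ⟨T, hT.1, ?_⟩
  by_contra hne
  obtain ⟨i, hi⟩ := exists_notMem_of_finrank_vanishingOn_pos hT.2
  have hrank := finrank_vanishingOn_le_union C T {i}
  rw [union_singleton] at hrank
  have := hmax (insert i T) ⟨hT.1.trans (subset_insert i T), by simp at hrank; omega⟩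
  rw [card_insert_of_notMem hi] at this
  omega

theorem exists_card_add_finrank_vanishingOn {l : ℕ}
    (hloc : ∀ i, ∃ R : Finset ι, i ∉ R ∧ #R ≤ l ∧ C.IsRecoverableFrom i R) :
    ∀ t : ℕ, t * l < finrank F C → ∃ S : Finset ι, finrank F C - t * l ≤
      finrank F (C.vanishingOn S) ∧ t + finrank F C ≤ #S + finrank F (C.vanishingOn S)
  | 0, _ => ⟨∅, by rw [vanishingOn_empty]; simp⟩
  | t + 1, ht => by
    rw [add_one_mul] at ht
    obtain ⟨S, hSrank, hScard⟩ := exists_card_add_finrank_vanishingOn hloc t (by omega)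
    have hS : 0 < finrank F (C.vanishingOn S) := by omega
    obtain ⟨i, hiS⟩ := exists_notMem_of_finrank_vanishingOn_pos hS
    obtain ⟨R, hiR, hRl, hrec⟩ := hloc i
    refine ⟨insert i (S ∪ R), ?_⟩
    rw [vanishingOn_insert_of_isRecoverableFrom hrec subset_union_right,
      card_insert_of_notMem (by simp [hiS, hiR]), add_one_mul]
    have := finrank_vanishingOn_le_union C S R
    have := card_add_finrank_vanishingOn_mono C (subset_union_left : S ⊆ S ∪ R)
    omega

theorem sInf_weight_le_card_sub [DecidableEq F] {T : Finset ι}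
    (hT : 0 < finrank F (C.vanishingOn T)) :
    sInf {w : ℕ | ∃ c ∈ C, c ≠ 0 ∧ w = #(univ.filter fun x => c x ≠ 0)} ≤
      Fintype.card ι - #T := by
  obtain ⟨c, hc, hc0⟩ :=
    exists_mem_ne_zero_of_ne_bot (one_le_finrank_iff.mp hT)
  rw [mem_vanishingOn] at hc
  calc _ ≤ #(univ.filter fun x => c x ≠ 0) := Nat.sInf_le (by exact ⟨c, hc.1, hc0, rfl⟩)
    _ ≤ #Tᶜ := card_le_card fun x hx => mem_compl.2 fun hxT => (mem_filter.1 hx).2 (hc.2 x hxT)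
    _ = Fintype.card ι - #T := card_compl T

end Fintype

end Submodule

theorem exists_mul_lt_and_ceil_div_le {k l : ℕ} (hk : 0 < k) (hl : 0 < l) :
    ∃ t : ℕ, t * l < k ∧ ⌈(k : ℚ) / l⌉ ≤ t + 1 := by
  refine ⟨(k - 1) / l, by have := Nat.div_mul_le_self (k - 1) l; omega, ?_⟩
  rw [Int.ceil_le, div_le_iff₀ (by positivity)]
  have := Nat.lt_div_mul_add (a := k - 1) hl
  exact_mod_cast (by rw [add_one_mul]; omega : k ≤ ((k - 1) / l + 1) * l)

theorem stmt10_general {F : Type*} [Field F] [DecidableEq F] {n k l d : ℕ}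
    (hl : 0 < l) (hk : 0 < k)
    (C : Submodule F (Fin n → F)) (hdim : Module.finrank F C = k)
    (hloc : ∀ i : Fin n, ∃ R : Finset (Fin n), i ∉ R ∧ R.card ≤ l ∧
      ∃ f : (Fin n → F) → F, ∀ c ∈ C, c i = f (fun x => if x ∈ R then c x else 0))
    (hd : d = sInf { t : ℕ | ∃ c ∈ C, c ≠ 0 ∧
      t = (univ.filter (fun x : Fin n => c x ≠ 0)).card }) :
    (d : ℤ) ≤ (n : ℤ) - (k : ℤ) + 2 - ⌈(k : ℚ) / (l : ℚ)⌉ := by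
  obtain ⟨t, htl, hceil⟩ := exists_mul_lt_and_ceil_div_le hk hl
  subst hdim
  obtain ⟨S, hSrank, hScard⟩ := Submodule.exists_card_add_finrank_vanishingOn hloc t htl
  have hS : 0 < finrank F (C.vanishingOn S) := by omega
  obtain ⟨T, hST, hT⟩ := Submodule.exists_superset_finrank_vanishingOn_eq_one hS
  have hmono := Submodule.card_add_finrank_vanishingOn_mono C hST
  have hdist := hd ▸ Submodule.sInf_weight_le_card_sub (hT ▸ Nat.one_pos)
  have hTn : #T ≤ n := by simpa using card_le_univ T
  rw [Fintype.card_fin] at hdist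
  omega

/-- Gopalan–Huang–Simitci–Yekhanin bound: If C is an [n,k,d]
linear code over GF(q) with locality l — every coordinate i is a function of the
restriction of the codeword to some set R_i of at most l other coordinates —
then d ≤ n − k + 2 − ⌈k/l⌉. -/
theorem stmt10 {F : Type*} [Field F] [Fintype F] [DecidableEq F] {n k l d : ℕ}
    (hl : 0 < l) (hk : 0 < k)
    (C : Submodule F (Fin n → F)) (hdim : Module.finrank F C = k)
    (hloc : ∀ i : Fin n, ∃ R : Finset (Fin n), i ∉ R ∧ R.card ≤ l ∧
      ∃ f : (Fin n → F) → F, ∀ c ∈ C, c i = f (fun x => if x ∈ R then c x else 0))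
    (hd : d = sInf { t : ℕ | ∃ c ∈ C, c ≠ 0 ∧
      t = (univ.filter (fun x : Fin n => c x ≠ 0)).card }) :
    (d : ℤ) ≤ (n : ℤ) - (k : ℤ) + 2 - ⌈(k : ℚ) / (l : ℚ)⌉ :=
  stmt10_general hl hk C hdim hloc hd
end

section
/- Let C be the systematic [n,k] code with generator matrix [I_k | P] where every row of P has weight exactly w ≥ 1, every set of at most w rows of P is linearly independent, and every column of P has weight l or l+1 with l = ⌊w·k/(n−k)⌋. Then C has locality at most l + 1. -/
open Finset

/-- For the balanced LRC with generator matrix [I_k | P], where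
every row of P has weight exactly w ≥ 1, every set of at most w rows of P is
linearly independent, and every column of P has weight l or l+1 with
l = ⌊w·k/(n−k)⌋ (r = n − k), the code has locality at most l + 1: every
codeword coordinate can be recovered from at most l + 1 other coordinates. -/
theorem stmt11 {F : Type*} [Field F] [Fintype F] [DecidableEq F] {k r w l : ℕ}
    (P : Matrix (Fin k) (Fin r) F) (hw : 1 ≤ w)
    (hl : l = w * k / r)
    (hrow : ∀ i : Fin k, (univ.filter (fun j => P i j ≠ 0)).card = w)
    (hind : ∀ s : Finset (Fin k), 1 ≤ s.card → s.card ≤ w →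
      LinearIndependent F (fun i : s => P (i : Fin k)))
    (hcol : ∀ j : Fin r, (univ.filter (fun i => P i j ≠ 0)).card = l ∨
                         (univ.filter (fun i => P i j ≠ 0)).card = l + 1) :
    ∀ x : Fin k ⊕ Fin r, ∃ R : Finset (Fin k ⊕ Fin r),
      x ∉ R ∧ R.card ≤ l + 1 ∧
      ∀ m₁ m₂ : Fin k → F,
        (∀ y ∈ R, Sum.elim m₁ (fun j => ∑ i, m₁ i * P i j) y
                = Sum.elim m₂ (fun j => ∑ i, m₂ i * P i j) y) →
        Sum.elim m₁ (fun j => ∑ i, m₁ i * P i j) x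
          = Sum.elim m₂ (fun j => ∑ i, m₂ i * P i j) x := by
  intro x
  have colcard : ∀ j : Fin r, (univ.filter (fun i => P i j ≠ 0)).card ≤ l + 1 := by
    intro j
    rcases hcol j with h | h <;> omega
  cases x with
  | inl i =>
    -- find a parity column j with P i j ≠ 0
    have hne : (univ.filter (fun j => P i j ≠ 0)).Nonempty := by
      rw [← card_pos, hrow i]; omega
    obtain ⟨j, hj⟩ := hne
    have hPij : P i j ≠ 0 := (mem_filter.mp hj).2
    set S : Finset (Fin k) := univ.filter (fun i' => P i' j ≠ 0) with hS
    have hiS : i ∈ S := by simp [hS, hPij]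
    refine ⟨((S.erase i).image Sum.inl) ∪ {Sum.inr j}, ?_, ?_, ?_⟩
    · simp
    · calc (((S.erase i).image Sum.inl) ∪ {Sum.inr j}).card
          ≤ ((S.erase i).image Sum.inl).card + ({Sum.inr j} : Finset (Fin k ⊕ Fin r)).card :=
            card_union_le _ _
        _ = ((S.erase i).image Sum.inl).card + 1 := by rw [card_singleton]
        _ ≤ (S.erase i).card + 1 := Nat.add_le_add_right card_image_le 1
        _ ≤ l + 1 := by
            have h1 : (S.erase i).card = S.card - 1 := card_erase_of_mem hiS
            have h2 := colcard j
            rw [← hS] at h2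
            have h3 : 1 ≤ S.card := card_pos.mpr ⟨i, hiS⟩
            omega
    · intro m₁ m₂ hR
      have hpar : (∑ i', m₁ i' * P i' j) = ∑ i', m₂ i' * P i' j := by
        have := hR (Sum.inr j) (by simp)
        simpa using this
      have hrest : ∀ i' ∈ univ.erase i, m₁ i' * P i' j = m₂ i' * P i' j := by
        intro i' hi'
        by_cases h0 : P i' j = 0
        · simp [h0]
        · have hi'S : i' ∈ S.erase i := by
            simp only [mem_erase] at hi' ⊢
            exact ⟨hi'.1, by simp [hS, h0]⟩
          have := hR (Sum.inl i') (mem_union_left _ (mem_image_of_mem _ hi'S))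
          simp only [Sum.elim_inl] at this
          rw [this]
      have hsplit₁ : (∑ i', m₁ i' * P i' j)
          = m₁ i * P i j + ∑ i' ∈ univ.erase i, m₁ i' * P i' j :=
        (Finset.add_sum_erase univ _ (mem_univ i)).symm
      have hsplit₂ : (∑ i', m₂ i' * P i' j)
          = m₂ i * P i j + ∑ i' ∈ univ.erase i, m₂ i' * P i' j :=
        (Finset.add_sum_erase univ _ (mem_univ i)).symm
      have hsum : ∑ i' ∈ univ.erase i, m₁ i' * P i' j
          = ∑ i' ∈ univ.erase i, m₂ i' * P i' j := Finset.sum_congr rfl hrest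
      have : m₁ i * P i j = m₂ i * P i j := by
        rw [hsplit₁, hsplit₂, hsum] at hpar
        exact add_right_cancel hpar
      simpa using mul_right_cancel₀ hPij this
  | inr j =>
    refine ⟨(univ.filter (fun i => P i j ≠ 0)).image Sum.inl, by simp, ?_, ?_⟩
    · exact le_trans (card_image_le) (colcard j)
    · intro m₁ m₂ hR
      simp only [Sum.elim_inr]
      apply Finset.sum_congr rfl
      intro i' _
      by_cases h0 : P i' j = 0
      · simp [h0]
      · have := hR (Sum.inl i') (mem_image_of_mem _ (by simp [h0]))
        simp only [Sum.elim_inl] at this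
        rw [this]
end
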